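/- arXiv:2104.07893 — 4 statements merged into one kernel-verified Lean document; each statement's English description precedes it below -/
import Mathlib

section
/- If A is an n×n complex matrix, k > n/2, and λ₀ ∈ Λ_k(A), then λ₀ is an eigenvalue of A whose eigenspace has dimension at least 2k − n. -/
set_option maxHeartbeats 1000000


/-- The rank-`k` numerical range of an `n × n` complex matrix `A`. -/
def rankNumRange (n k : ℕ) (A : Matrix (Fin n) (Fin n) ℂ) : Set ℂ :=
  {l : ℂ | ∃ P : Matrix (Fin n) (Fin n) ℂ,
    P.IsHermitian ∧ P * P = P ∧ P.rank = k ∧ P * A * P = l • P}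

theorem rankNumRange_eigenvalue_of_large_rank (n k : ℕ) (hk : n < 2 * k)
    (A : Matrix (Fin n) (Fin n) ℂ) (l : ℂ) (hl : l ∈ rankNumRange n k A) :
    Module.End.HasEigenvalue (Matrix.toLin' A) l ∧
      2 * k - n ≤ Module.finrank ℂ (Module.End.eigenspace (Matrix.toLin' A) l) := by
  obtain ⟨P, _hherm, hidem, hrank, hpap⟩ := hl
  set f : (Fin n → ℂ) →ₗ[ℂ] (Fin n → ℂ) := Matrix.toLin' A with hf
  set p : (Fin n → ℂ) →ₗ[ℂ] (Fin n → ℂ) := Matrix.toLin' P with hp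
  have hpp : p ∘ₗ p = p := by
    rw [hp, ← Matrix.toLin'_mul, hidem]
  have hpfp : p ∘ₗ f ∘ₗ p = l • p := by
    rw [hp, hf, ← Matrix.toLin'_mul, ← Matrix.toLin'_mul, ← mul_assoc, hpap, map_smul]
  -- dimension facts
  have hdim : Module.finrank ℂ (Fin n → ℂ) = n := by simp
  have hrk : Module.finrank ℂ (LinearMap.range p) = k := by
    rw [← hrank, Matrix.rank, ← Matrix.toLin'_apply']
  have hkn : k ≤ n := by
    have h := LinearMap.finrank_range_add_finrank_ker p
    omega
  have hker : Module.finrank ℂ (LinearMap.ker p) = n - k := by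
    have := LinearMap.finrank_range_add_finrank_ker p
    omega
  -- the map from range p to ker p
  have hmaps : ∀ x : LinearMap.range p, (f - l • 1) x.1 ∈ LinearMap.ker p := by
    rintro ⟨x, y, rfl⟩
    have h1 : p (f (p y)) = l • p y := by
      have := congrFun (congrArg DFunLike.coe hpfp) y
      simpa using this
    have h2 : p (p y) = p y := by
      have := congrFun (congrArg DFunLike.coe hpp) y
      simpa using this
    simp [LinearMap.mem_ker, h1, h2]
  set g : LinearMap.range p →ₗ[ℂ] LinearMap.ker p :=
    LinearMap.codRestrict (LinearMap.ker p)
      ((f - l • 1) ∘ₗ (LinearMap.range p).subtype) (fun x => by simpa using hmaps x) with hg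
  have hgker : Module.finrank ℂ (LinearMap.ker g) + (n - k) ≥ k := by
    have h1 := LinearMap.finrank_range_add_finrank_ker g
    have h2 : Module.finrank ℂ (LinearMap.range g) ≤ n - k :=
      (LinearMap.range g).finrank_le.trans_eq hker
    omega
  -- map ker g into eigenspace
  have hsub : (LinearMap.ker g).map (LinearMap.range p).subtype ≤
      Module.End.eigenspace f l := by
    rintro x ⟨⟨y, hy⟩, hmem, rfl⟩
    have : (f - l • 1) y = 0 := by
      have := hmem
      simp only [LinearMap.mem_ker, hg] at this
      have := congrArg Subtype.val this
      simpa using this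
    rw [Module.End.eigenspace_def]
    simpa using this
  have hfd : Module.finrank ℂ ((LinearMap.ker g).map (LinearMap.range p).subtype)
      = Module.finrank ℂ (LinearMap.ker g) :=
    Submodule.finrank_map_subtype_eq _ _
  have hfin : 2 * k - n ≤ Module.finrank ℂ (Module.End.eigenspace f l) := by
    have h1 : 2 * k - n ≤ Module.finrank ℂ (LinearMap.ker g) := by omega
    have h2 := Submodule.finrank_mono hsub
    omega
  refine ⟨?_, hfin⟩
  rw [Module.End.hasEigenvalue_iff]
  intro hbot
  have : Module.finrank ℂ (Module.End.eigenspace f l) = 0 := by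
    rw [hbot]
    exact finrank_bot ℂ _
  omega
end

section
/- A 2×2 complex matrix A is generic (i.e., Re(e^{iθ}A) has two distinct eigenvalues for every θ ∈ ℝ) if and only if A is not normal. -/
open Matrix

/-- The "real part" `Re(e^{iθ}A) = (e^{iθ}A + (e^{iθ}A)ᴴ)/2` of a complex matrix. -/
noncomputable def reTheta {n : ℕ} (A : Matrix (Fin n) (Fin n) ℂ) (θ : ℝ) :
    Matrix (Fin n) (Fin n) ℂ :=
  (1 / 2 : ℂ) • (Complex.exp (θ * Complex.I) • A + (Complex.exp (θ * Complex.I) • A)ᴴ)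

theorem reTheta_isHermitian {n : ℕ} (A : Matrix (Fin n) (Fin n) ℂ) (θ : ℝ) :
    (reTheta A θ).IsHermitian := by
  unfold reTheta
  unfold Matrix.IsHermitian
  rw [Matrix.conjTranspose_smul, Matrix.conjTranspose_add, Matrix.conjTranspose_conjTranspose,
    add_comm]
  norm_num

/-- `A` is generic if for every `θ` all `n` eigenvalues of `Re(e^{iθ}A)` are distinct. -/
def IsGeneric {n : ℕ} (A : Matrix (Fin n) (Fin n) ℂ) : Prop :=
  ∀ θ : ℝ, Function.Injective (reTheta_isHermitian A θ).eigenvalues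

section Aux

local notation "conj" => starRingEnd ℂ

lemma aux_not_inj_iff {f : Fin 2 → ℝ} : ¬ Function.Injective f ↔ f 0 = f 1 := by
  constructor
  · intro h
    by_contra hne
    apply h
    intro i j hij
    fin_cases i <;> fin_cases j <;> simp_all
  · intro h hinj
    have : (0 : Fin 2) = 1 := hinj h
    simp at this

lemma aux_scalar_of_eq (H : Matrix (Fin 2) (Fin 2) ℂ) (hH : H.IsHermitian)
    (h : hH.eigenvalues 0 = hH.eigenvalues 1) :
    H = (hH.eigenvalues 0 : ℂ) • 1 := by
  have hst := hH.spectral_theorem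
  have hd : diagonal (RCLike.ofReal ∘ hH.eigenvalues)
      = (hH.eigenvalues 0 : ℂ) • (1 : Matrix (Fin 2) (Fin 2) ℂ) := by
    ext i j
    fin_cases i <;> fin_cases j <;>
      simp [diagonal, h, Matrix.one_apply]
  rw [hd] at hst
  rw [Unitary.conjStarAlgAut_apply, Matrix.mul_smul, Matrix.smul_mul, mul_one,
    Matrix.mem_unitaryGroup_iff.mp (IsHermitian.eigenvectorUnitary hH).2] at hst
  exact hst

lemma aux_eig_of_scalar (H : Matrix (Fin 2) (Fin 2) ℂ) (hH : H.IsHermitian) (c : ℝ)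
    (h : H = (c : ℂ) • 1) (j : Fin 2) : hH.eigenvalues j = c := by
  have hv := hH.mulVec_eigenvectorBasis j
  set v := (WithLp.equiv 2 ((i : Fin 2) → ℂ)) (hH.eigenvectorBasis j) with hvdef
  have hnz : v ≠ 0 := by
    intro h0
    have := hH.eigenvectorBasis.orthonormal.ne_zero j
    apply this
    ext i
    exact congrFun h0 i
  have hv2 : (c : ℂ) • v = hH.eigenvalues j • v := by
    rw [← (show H *ᵥ v = hH.eigenvalues j • v from hv), h, smul_mulVec, one_mulVec]
  have hz : ((c : ℂ) - (hH.eigenvalues j : ℂ)) • v = 0 := by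
    rw [sub_smul, hv2]
    ext i
    simp [Complex.real_smul]
  rcases smul_eq_zero.mp hz with h' | h'
  · have : (c : ℂ) = (hH.eigenvalues j : ℂ) := by linear_combination h'
    exact_mod_cast this.symm
  · exact absurd h' hnz

lemma aux_mat_ext {M N : Matrix (Fin 2) (Fin 2) ℂ} (h00 : M 0 0 = N 0 0)
    (h01 : M 0 1 = N 0 1) (h10 : M 1 0 = N 1 0) (h11 : M 1 1 = N 1 1) : M = N := by
  ext i j
  fin_cases i <;> fin_cases j
  · exact h00
  · exact h01
  · exact h10
  · exact h11

lemma aux_reTheta_apply {n : ℕ} (A : Matrix (Fin n) (Fin n) ℂ) (θ : ℝ) (i j : Fin n) :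
    reTheta A θ i j = (1/2 : ℂ) * (Complex.exp (θ * Complex.I) * A i j
      + conj (Complex.exp (θ * Complex.I)) * conj (A j i)) := by
  simp [reTheta, conjTranspose_apply, mul_comm]

lemma aux_exp_conj (θ : ℝ) :
    Complex.exp (θ * Complex.I) * conj (Complex.exp (θ * Complex.I)) = 1 := by
  rw [← Complex.exp_conj, _root_.map_mul, Complex.conj_ofReal, Complex.conj_I,
    ← Complex.exp_add]
  ring_nf
  exact Complex.exp_zero

lemma aux_sq_exp (z : ℂ) (hz : ‖z‖ = 1) :
    Complex.exp ((z.arg / 2 : ℝ) * Complex.I) * Complex.exp ((z.arg / 2 : ℝ) * Complex.I)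
      = z := by
  rw [← Complex.exp_add]
  have h : ((z.arg / 2 : ℝ) : ℂ) * Complex.I + ((z.arg / 2 : ℝ) : ℂ) * Complex.I
      = (z.arg : ℂ) * Complex.I := by push_cast; ring
  rw [h]
  have := Complex.norm_mul_exp_arg_mul_I z
  rwa [hz, Complex.ofReal_one, one_mul] at this

/-- The scalar condition in terms of entries. -/
lemma aux_scalar_iff (A : Matrix (Fin 2) (Fin 2) ℂ) (θ : ℝ) :
    (∃ l : ℝ, reTheta A θ = (l : ℂ) • 1) ↔
      (Complex.exp (θ * Complex.I) * (A 0 0 - A 1 1)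
        + conj (Complex.exp (θ * Complex.I)) * (conj (A 0 0) - conj (A 1 1)) = 0 ∧
       Complex.exp (θ * Complex.I) * A 0 1
        + conj (Complex.exp (θ * Complex.I)) * conj (A 1 0) = 0) := by
  set e := Complex.exp (θ * Complex.I) with he
  constructor
  · rintro ⟨l, h⟩
    have h00 := congrFun (congrFun h 0) 0
    have h11 := congrFun (congrFun h 1) 1
    have h01 := congrFun (congrFun h 0) 1
    rw [aux_reTheta_apply, Matrix.smul_apply, Matrix.one_apply_eq, smul_eq_mul, mul_one,
      ← he] at h00 h11
    rw [aux_reTheta_apply, Matrix.smul_apply,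
      Matrix.one_apply_ne (by decide : (0 : Fin 2) ≠ 1), smul_eq_mul, mul_zero, ← he] at h01
    constructor
    · linear_combination 2 * h00 - 2 * h11
    · linear_combination 2 * h01
  · rintro ⟨h1, h2⟩
    refine ⟨(e * A 0 0).re, ?_⟩
    have ha : e * A 0 0 + conj e * conj (A 0 0) = 2 * ((e * A 0 0).re : ℂ) := by
      rw [← _root_.map_mul]
      have := Complex.add_conj (e * A 0 0)
      push_cast at this
      exact this
    have h2' := congrArg conj h2
    simp only [map_add, _root_.map_mul, Complex.conj_conj, map_zero] at h2'
    refine aux_mat_ext ?_ ?_ ?_ ?_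
    · rw [aux_reTheta_apply, ← he, Matrix.smul_apply, Matrix.one_apply_eq, smul_eq_mul, mul_one]
      linear_combination (1/2) * ha
    · rw [aux_reTheta_apply, ← he, Matrix.smul_apply,
        Matrix.one_apply_ne (by decide : (0 : Fin 2) ≠ 1), smul_eq_mul, mul_zero]
      linear_combination (1/2) * h2
    · rw [aux_reTheta_apply, ← he, Matrix.smul_apply,
        Matrix.one_apply_ne (by decide : (1 : Fin 2) ≠ 0), smul_eq_mul, mul_zero]
      linear_combination (1/2) * h2'
    · rw [aux_reTheta_apply, ← he, Matrix.smul_apply, Matrix.one_apply_eq, smul_eq_mul, mul_one]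
      linear_combination (1/2) * ha - (1/2) * h1

lemma aux_normal_iff (A : Matrix (Fin 2) (Fin 2) ℂ) :
    (A * Aᴴ = Aᴴ * A) ↔
      (A 0 1 * conj (A 0 1) = A 1 0 * conj (A 1 0) ∧
       conj (A 1 0) * (A 0 0 - A 1 1) = A 0 1 * (conj (A 0 0) - conj (A 1 1))) := by
  constructor
  · intro h
    constructor
    · have := congrFun (congrFun h 0) 0
      simp [Matrix.mul_apply, Fin.sum_univ_two, conjTranspose_apply] at this
      linear_combination this
    · have := congrFun (congrFun h 0) 1
      simp [Matrix.mul_apply, Fin.sum_univ_two, conjTranspose_apply] at this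
      linear_combination this
  · rintro ⟨h1, h2⟩
    have h2' := congrArg conj h2
    simp only [map_sub, _root_.map_mul, Complex.conj_conj] at h2'
    ext i j
    fin_cases i <;> fin_cases j <;>
      simp [Matrix.mul_apply, Fin.sum_univ_two, conjTranspose_apply] <;>
      [linear_combination h1; linear_combination h2;
       linear_combination h2'; linear_combination -h1]

/-- Core complex-number equivalence. -/
lemma aux_exists_theta_iff (a b c d : ℂ) :
    (∃ θ : ℝ, Complex.exp (θ * Complex.I) * (a - d)
        + conj (Complex.exp (θ * Complex.I)) * (conj a - conj d) = 0 ∧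
      Complex.exp (θ * Complex.I) * b
        + conj (Complex.exp (θ * Complex.I)) * conj c = 0) ↔
    (b * conj b = c * conj c ∧ conj c * (a - d) = b * (conj a - conj d)) := by
  constructor
  · rintro ⟨θ, h1, h2⟩
    set e := Complex.exp (θ * Complex.I) with he
    have hee : e * conj e = 1 := aux_exp_conj θ
    have hcbar : conj c = -(e * e * b) := by
      linear_combination e * h2 - conj c * hee
    have hc : c = -(conj e * conj e * conj b) := by
      have := congrArg conj hcbar
      simpa only [_root_.map_mul, map_neg, Complex.conj_conj] using this
    have hw : e * e * (a - d) = -(conj a - conj d) := by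
      linear_combination e * h1 - (conj a - conj d) * hee
    constructor
    · linear_combination (-(conj c)) * hc + (conj e * conj e * conj b) * hcbar
        + (-(b * conj b) * (e * conj e + 1)) * hee
    · linear_combination (a - d) * hcbar - b * hw
  · rintro ⟨hn1, hn2⟩
    by_cases hb : b = 0
    · -- then c = 0
      have h0 : c * conj c = 0 := by rw [← hn1, hb]; ring
      have hc0 : c = 0 := by
        have hns := Complex.mul_conj c
        rw [h0] at hns
        have : Complex.normSq c = 0 := by exact_mod_cast hns.symm
        exact Complex.normSq_eq_zero.mp this
      by_cases hw : a - d = 0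
      · refine ⟨0, ?_, ?_⟩
        · have hcw : conj a - conj d = 0 := by rw [← map_sub, hw, map_zero]
          rw [hw, hcw]; ring
        · rw [hb, hc0, map_zero]; ring
      · set z := -(conj (a - d)) / (a - d) with hzdef
        have habs : ‖z‖ = 1 := by
          rw [hzdef, norm_div, norm_neg, Complex.norm_conj, div_self]
          exact norm_ne_zero_iff.mpr hw
        refine ⟨z.arg / 2, ?_, ?_⟩
        · set e := Complex.exp ((z.arg / 2 : ℝ) * Complex.I) with he
          have hee : e * conj e = 1 := aux_exp_conj _
          have he2 : e * e = z := aux_sq_exp z habs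
          have hz : e * e * (a - d) = -(conj a - conj d) := by
            rw [he2, hzdef]
            field_simp
            rw [map_sub]
          linear_combination conj e * hz - e * (a - d) * hee
        · rw [hb, hc0, map_zero]; ring
    · -- b ≠ 0
      have habsbc : ‖b‖ = ‖c‖ := by
        have h1' : (Complex.normSq b : ℂ) = (Complex.normSq c : ℂ) := by
          rw [← Complex.mul_conj, ← Complex.mul_conj]; exact hn1
        have h2' : Complex.normSq b = Complex.normSq c := by exact_mod_cast h1'
        rw [Complex.norm_def, Complex.norm_def, h2']
      set z := -(conj c) / b with hzdef
      have habs : ‖z‖ = 1 := by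
        rw [hzdef, norm_div, norm_neg, Complex.norm_conj, ← habsbc, div_self]
        exact norm_ne_zero_iff.mpr hb
      refine ⟨z.arg / 2, ?_, ?_⟩
      · set e := Complex.exp ((z.arg / 2 : ℝ) * Complex.I) with he
        have hee : e * conj e = 1 := aux_exp_conj _
        have he2 : e * e = z := aux_sq_exp z habs
        have hz : e * e * b = -(conj c) := by
          rw [he2, hzdef]; field_simp
        have h3 : b * (e * e * (a - d) + (conj a - conj d)) = 0 := by
          linear_combination (a - d) * hz - hn2
        have hw2 : e * e * (a - d) = -(conj a - conj d) := by
          rcases mul_eq_zero.mp h3 with h' | h'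
          · exact absurd h' hb
          · linear_combination h'
        linear_combination conj e * hw2 - e * (a - d) * hee
      · set e := Complex.exp ((z.arg / 2 : ℝ) * Complex.I) with he
        have hee : e * conj e = 1 := aux_exp_conj _
        have he2 : e * e = z := aux_sq_exp z habs
        have hz : e * e * b = -(conj c) := by
          rw [he2, hzdef]; field_simp
        linear_combination conj e * hz - e * b * hee

end Aux

theorem isGeneric_iff_not_normal (A : Matrix (Fin 2) (Fin 2) ℂ) :
    IsGeneric A ↔ ¬(A * Aᴴ = Aᴴ * A) := by
  have key : (∃ θ : ℝ, ∃ l : ℝ, reTheta A θ = (l : ℂ) • 1) ↔ (A * Aᴴ = Aᴴ * A) := by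
    rw [aux_normal_iff, ← aux_exists_theta_iff (A 0 0) (A 0 1) (A 1 0) (A 1 1)]
    exact exists_congr fun θ => aux_scalar_iff A θ
  constructor
  · intro hg hn
    obtain ⟨θ, l, hθ⟩ := key.mpr hn
    have h0 := aux_eig_of_scalar _ (reTheta_isHermitian A θ) l hθ 0
    have h1 := aux_eig_of_scalar _ (reTheta_isHermitian A θ) l hθ 1
    exact aux_not_inj_iff.mpr (h0.trans h1.symm) (hg θ)
  · intro hn θ
    by_contra hni
    apply hn
    apply key.mp
    exact ⟨θ, _, aux_scalar_of_eq _ (reTheta_isHermitian A θ) (aux_not_inj_iff.mp hni)⟩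
end

section
/- Let A be an n×n tridiagonal 2-periodic matrix with n odd: the diagonal entries satisfy a_{ii} = a₁ for odd i and a_{ii} = a₂ for even i, and the unordered off-diagonal pairs {a_{i,i+1}, a_{i+1,i}} equal {b₁, c₁} for odd i and {b₂, c₂} for even i. Then for every θ ∈ ℝ, the real number Re(e^{iθ}a₁) is an eigenvalue of the Hermitian matrix Re(e^{iθ}A). -/
open Matrix

/-- `A` is tridiagonal: `A i j = 0` whenever `|i - j| > 1`. -/
def IsTridiagonal {n : ℕ} (A : Matrix (Fin n) (Fin n) ℂ) : Prop :=
  ∀ i j : Fin n, ((i : ℕ) + 1 < (j : ℕ) ∨ (j : ℕ) + 1 < (i : ℕ)) → A i j = 0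

private theorem reTheta_aux (n : ℕ) (hn : Odd n)
    (A : Matrix (Fin n) (Fin n) ℂ) (hA : IsTridiagonal A)
    (a₁ : ℂ)
    (hdiag : ∀ i : Fin n, (i : ℕ) % 2 = 0 → A i i = a₁) :
    ∀ θ : ℝ, Module.End.HasEigenvalue (Matrix.toLin' (reTheta A θ))
      (((Complex.exp (θ * Complex.I) * a₁).re : ℂ)) := by
  intro θ
  obtain ⟨m, hm⟩ := hn
  set e := Complex.exp (θ * Complex.I) with he
  set B := reTheta A θ with hB
  set lam : ℂ := ((e * a₁).re : ℂ) with hlam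
  -- entry formula for B
  have hBentry : ∀ i j : Fin n, B i j = (1/2 : ℂ) * (e * A i j + starRingEnd ℂ (e * A j i)) := by
    intro i j
    simp [hB, reTheta, conjTranspose_apply, Matrix.add_apply, Matrix.smul_apply, smul_eq_mul,
      _root_.map_mul]
    ring
  -- B is tridiagonal
  have hBtri : ∀ i j : Fin n, ((i : ℕ) + 1 < (j : ℕ) ∨ (j : ℕ) + 1 < (i : ℕ)) → B i j = 0 := by
    intro i j hij
    rw [hBentry, hA i j hij, hA j i (Or.symm hij)]
    simp
  -- diagonal of B at even indices equals lam
  have hBdiag : ∀ i : Fin n, (i : ℕ) % 2 = 0 → B i i = lam := by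
    intro i hi
    rw [hBentry, hdiag i hi, hlam]
    have h2 : e * a₁ + starRingEnd ℂ (e * a₁) = ((2 * (e * a₁).re : ℝ) : ℂ) := Complex.add_conj _
    rw [h2]; push_cast; ring
  -- embedding from even coordinates
  have hdiv : ∀ i : Fin n, (i : ℕ) / 2 < m + 1 := by
    intro i; have := i.isLt; omega
  let E : (Fin (m + 1) → ℂ) → (Fin n → ℂ) := fun v i =>
    if (i : ℕ) % 2 = 0 then v ⟨(i : ℕ) / 2, hdiv i⟩ else 0
  have hlt : ∀ k : Fin m, 2 * (k : ℕ) + 1 < n := by intro k; have := k.isLt; omega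
  have hEadd : ∀ v w, E (v + w) = E v + E w := by
    intro v w; funext i; simp only [E, Pi.add_apply]; split <;> simp
  have hEsmul : ∀ (c : ℂ) v, E (c • v) = c • E v := by
    intro c v; funext i; simp only [E, Pi.smul_apply, smul_eq_mul]; split <;> simp
  let T : (Fin (m + 1) → ℂ) →ₗ[ℂ] (Fin m → ℂ) :=
    { toFun := fun v k => B.mulVec (E v) ⟨2 * (k : ℕ) + 1, hlt k⟩
      map_add' := by
        intro v w
        funext k
        show (B *ᵥ E (v + w)) _ = (B *ᵥ E v) _ + (B *ᵥ E w) _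
        rw [hEadd, Matrix.mulVec_add]; rfl
      map_smul' := by
        intro c v
        funext k
        show (B *ᵥ E (c • v)) _ = c • (B *ᵥ E v) _
        rw [hEsmul, Matrix.mulVec_smul]; rfl }
  -- T is not injective
  have hTni : ¬ Function.Injective T := by
    intro h
    have := LinearMap.finrank_le_finrank_of_injective h
    simp [Module.finrank_fin_fun] at this
  rw [Function.not_injective_iff] at hTni
  obtain ⟨x, y, hxy, hne⟩ := hTni
  set v := x - y with hv
  have hv0 : v ≠ 0 := sub_ne_zero_of_ne hne
  have hTv : T v = 0 := by rw [hv, map_sub, hxy, sub_self]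
  -- the eigenvector
  set w := E v with hw
  have hw0 : w ≠ 0 := by
    intro h
    apply hv0
    funext k
    have hk : 2 * (k : ℕ) < n := by have := k.isLt; omega
    have := congrFun h ⟨2 * (k : ℕ), hk⟩
    simpa [hw, E, Nat.mul_div_cancel_left _ (by norm_num : 0 < 2)] using this
  have key : B.mulVec w = lam • w := by
    funext i
    rcases Nat.even_or_odd (i : ℕ) with hi | hi
    · -- even row
      have hi' : (i : ℕ) % 2 = 0 := Nat.even_iff.mp hi
      have : B.mulVec w i = B i i * w i := by
        rw [Matrix.mulVec, dotProduct]
        apply Finset.sum_eq_single i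
        · intro j _ hji
          rcases Nat.even_or_odd (j : ℕ) with hj | hj
          · have hj' : (j : ℕ) % 2 = 0 := Nat.even_iff.mp hj
            have hne' : (i : ℕ) ≠ (j : ℕ) := fun h => hji (Fin.ext h.symm)
            have : (i : ℕ) + 1 < (j : ℕ) ∨ (j : ℕ) + 1 < (i : ℕ) := by omega
            rw [hBtri i j this, zero_mul]
          · have : w j = 0 := by
              simp [hw, E, Nat.odd_iff.mp hj]
            rw [this, mul_zero]
        · intro h; exact absurd (Finset.mem_univ i) h
      rw [this, hBdiag i hi', Pi.smul_apply, smul_eq_mul]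
    · -- odd row
      have hi' : (i : ℕ) % 2 = 1 := Nat.odd_iff.mp hi
      have hk : (i : ℕ) / 2 < m := by have := i.isLt; omega
      have hiw : w i = 0 := by simp [hw, E, hi']
      have hTv' := congrFun hTv ⟨(i : ℕ) / 2, hk⟩
      have hieq : (⟨2 * ((i : ℕ) / 2) + 1, hlt ⟨(i : ℕ) / 2, hk⟩⟩ : Fin n) = i := by
        apply Fin.ext; simp; omega
      simp only [T, LinearMap.coe_mk, AddHom.coe_mk, Pi.zero_apply, hieq] at hTv'
      rw [Pi.smul_apply, hiw, smul_zero, hw]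
      exact hTv'
  exact Module.End.hasEigenvalue_of_hasEigenvector ⟨by
    rw [Module.End.mem_eigenspace_iff, Matrix.toLin'_apply, key], hw0⟩

/-- For a tridiagonal 2-periodic matrix of odd size (diagonal entries alternate
`a₁, a₂, a₁, …` and the unordered off-diagonal pairs alternate `{b₁,c₁}, {b₂,c₂}, …`),
`Re(e^{iθ}a₁)` is an eigenvalue of `Re(e^{iθ}A)` for every `θ`. -/
theorem reTheta_eigenvalue_of_two_periodic_odd (n : ℕ) (hn : Odd n)
    (A : Matrix (Fin n) (Fin n) ℂ) (hA : IsTridiagonal A)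
    (a₁ a₂ b₁ c₁ b₂ c₂ : ℂ)
    (hdiag : ∀ i : Fin n, A i i = if (i : ℕ) % 2 = 0 then a₁ else a₂)
    (hoff : ∀ i : Fin n, ∀ h : (i : ℕ) + 1 < n,
      if (i : ℕ) % 2 = 0 then
        (A i ⟨(i : ℕ) + 1, h⟩ = b₁ ∧ A ⟨(i : ℕ) + 1, h⟩ i = c₁) ∨
        (A i ⟨(i : ℕ) + 1, h⟩ = c₁ ∧ A ⟨(i : ℕ) + 1, h⟩ i = b₁)
      else
        (A i ⟨(i : ℕ) + 1, h⟩ = b₂ ∧ A ⟨(i : ℕ) + 1, h⟩ i = c₂) ∨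
        (A i ⟨(i : ℕ) + 1, h⟩ = c₂ ∧ A ⟨(i : ℕ) + 1, h⟩ i = b₂)) :
    ∀ θ : ℝ, Module.End.HasEigenvalue (Matrix.toLin' (reTheta A θ))
      (((Complex.exp (θ * Complex.I) * a₁).re : ℂ)) :=
  reTheta_aux n hn A hA a₁ (fun i hi => by rw [hdiag i, if_pos hi])
end

section
/- Let A be an n×n reciprocal 2-periodic matrix with n ≥ 4: A is tridiagonal with zero main diagonal, a_{i+1,i} a_{i,i+1} = 1 for all i, and the quantities A_i := (|a_{i+1,i}|² + |a_{i,i+1}|²)/2 satisfy A_i = A₁ for odd i and A_i = A₂ for even i. If A₁ = 1 or A₂ = 1, then for some θ ∈ ℝ the Hermitian matrix Re(e^{iθ}A) has a repeated eigenvalue (so A is not generic). In particular, Im A = (A − A*)/(2i) has a repeated eigenvalue. -/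
open Matrix

/-- The imaginary part `Im A = (A - A*)/(2i)` of a complex matrix. -/
noncomputable def imPart {n : ℕ} (A : Matrix (Fin n) (Fin n) ℂ) :
    Matrix (Fin n) (Fin n) ℂ :=
  (1 / (2 * Complex.I) : ℂ) • (A - Aᴴ)

theorem imPart_isHermitian {n : ℕ} (A : Matrix (Fin n) (Fin n) ℂ) :
    (imPart A).IsHermitian := by
  unfold imPart
  unfold Matrix.IsHermitian
  rw [Matrix.conjTranspose_smul, Matrix.conjTranspose_sub, Matrix.conjTranspose_conjTranspose]
  rw [show (star (1 / (2 * Complex.I) : ℂ)) = -(1 / (2 * Complex.I)) by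
    simp [Complex.ext_iff, div_eq_mul_inv]]
  module

/- ### Auxiliary lemmas -/

lemma not_inj_of_two {n : ℕ} {M : Matrix (Fin n) (Fin n) ℂ} (hM : M.IsHermitian)
    (μ : ℝ) (v w : Fin n → ℂ)
    (hv : M.mulVec v = (μ : ℂ) • v) (hw : M.mulVec w = (μ : ℂ) • w)
    (hv0 : v ≠ 0) (hw0 : w ≠ 0)
    (hdisj : ∀ i, v i = 0 ∨ w i = 0) :
    ¬ Function.Injective hM.eigenvalues := by
  intro hinj
  set b := hM.eigenvectorBasis with hb
  set f : (Fin n → ℂ) → Fin n → ℂ := fun u i => star (⇑(b i)) ⬝ᵥ u with hf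
  have key : ∀ u : Fin n → ℂ, M.mulVec u = (μ : ℂ) • u →
      ∀ i, hM.eigenvalues i ≠ μ → f u i = 0 := by
    intro u hu i hi
    have h1 : star (⇑(b i)) ⬝ᵥ (M.mulVec u) = (hM.eigenvalues i : ℂ) * (star (⇑(b i)) ⬝ᵥ u) := by
      rw [Matrix.dotProduct_mulVec]
      have h2 : star (⇑(b i)) ᵥ* M = star (M.mulVec (⇑(b i))) := by
        rw [Matrix.star_mulVec, hM.eq]
      rw [h2, hM.mulVec_eigenvectorBasis]
      rw [star_smul]
      simp [smul_dotProduct, Complex.real_smul, hb]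
    have h3 : star (⇑(b i)) ⬝ᵥ (M.mulVec u) = (μ : ℂ) * (star (⇑(b i)) ⬝ᵥ u) := by
      rw [hu, dotProduct_smul, smul_eq_mul]
    have h4 : ((hM.eigenvalues i : ℂ) - (μ : ℂ)) * (star (⇑(b i)) ⬝ᵥ u) = 0 := by
      rw [sub_mul, ← h1, h3, sub_self]
    have h5 : (hM.eigenvalues i : ℂ) - (μ : ℂ) ≠ 0 := by
      intro h
      apply hi
      exact_mod_cast sub_eq_zero.mp h
    exact (mul_eq_zero.mp h4).resolve_left h5
  have claim2 : ∀ u : Fin n → ℂ, (∀ i, f u i = 0) → u = 0 := by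
    intro u hu
    have hrepr : ∀ i, b.repr ((WithLp.equiv 2 (Fin n → ℂ)).symm u) i = f u i := by
      intro i
      rw [b.repr_apply_apply, EuclideanSpace.inner_eq_star_dotProduct]
      exact dotProduct_comm _ _
    have h0 : (WithLp.equiv 2 (Fin n → ℂ)).symm u = 0 := by
      rw [← b.sum_repr ((WithLp.equiv 2 (Fin n → ℂ)).symm u)]
      simp only [hrepr]
      simp [hu]
    simpa using congrArg (WithLp.equiv 2 (Fin n → ℂ)) h0
  obtain ⟨i, hi⟩ : ∃ i, f v i ≠ 0 := by
    by_contra h; push_neg at h; exact hv0 (claim2 v h)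
  obtain ⟨j, hj⟩ : ∃ j, f w j ≠ 0 := by
    by_contra h; push_neg at h; exact hw0 (claim2 w h)
  have hlami : hM.eigenvalues i = μ := by
    by_contra h; exact hi (key v hv i h)
  have hlamj : hM.eigenvalues j = μ := by
    by_contra h; exact hj (key w hw j h)
  have hij : i = j := hinj (hlami.trans hlamj.symm)
  subst hij
  set c := f v i with hc
  set d := f w i with hd
  set u : Fin n → ℂ := d • v - c • w with hu
  have humu : M.mulVec u = (μ : ℂ) • u := by
    rw [hu, Matrix.mulVec_sub, Matrix.mulVec_smul, Matrix.mulVec_smul, hv, hw,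
      smul_sub, smul_comm d, smul_comm c]
  have hfu : ∀ k, f u k = 0 := by
    intro k
    have hlin : f u k = d * f v k - c * f w k := by
      simp [hf, hu, dotProduct_sub, dotProduct_smul]
    by_cases hk : hM.eigenvalues k = μ
    · have : k = i := hinj (hk.trans hlami.symm)
      subst this
      rw [hlin, ← hc, ← hd, mul_comm, sub_self]
    · rw [hlin, key v hv k hk, key w hw k hk, mul_zero, mul_zero, sub_self]
  have hu0 : u = 0 := claim2 u hfu
  rw [hu] at hu0
  have hdv : d • v = c • w := sub_eq_zero.mp hu0
  obtain ⟨k, hk⟩ : ∃ k, v k ≠ 0 := Function.ne_iff.mp hv0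
  have hwk : w k = 0 := (hdisj k).resolve_left hk
  have : d * v k = c * w k := congrFun hdv k
  rw [hwk, mul_zero] at this
  exact hj (mul_eq_zero.mp this |>.resolve_right hk)

lemma not_inj_combine {n : ℕ} {M : Matrix (Fin n) (Fin n) ℂ} (hM : M.IsHermitian)
    (μ : ℝ) (p q : ℕ) (hpq : p + 1 < q) (hp : p < n) (hq : q < n)
    (v w : Fin n → ℂ)
    (hv : M.mulVec v = (μ : ℂ) • v) (hw : M.mulVec w = (μ : ℂ) • w)
    (hvp : v ⟨p, hp⟩ ≠ 0) (hvs : ∀ j : Fin n, (j:ℕ) ≠ p → (j:ℕ) ≠ p+1 → v j = 0)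
    (hwq : w ⟨q, hq⟩ ≠ 0) (hws : ∀ j : Fin n, (j:ℕ) ≠ q → (j:ℕ) ≠ q+1 → w j = 0) :
    ¬ Function.Injective hM.eigenvalues := by
  apply not_inj_of_two hM μ v w hv hw
  · intro h0; exact hvp (by rw [h0]; rfl)
  · intro h0; exact hwq (by rw [h0]; rfl)
  · intro i
    by_cases h : (i:ℕ) = p ∨ (i:ℕ) = p+1
    · right; exact hws i (by omega) (by omega)
    · left; push_neg at h; exact hvs i h.1 h.2

lemma block_eigenvector {n : ℕ} {M : Matrix (Fin n) (Fin n) ℂ}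
    (hM : M.IsHermitian)
    (htri : ∀ i j : Fin n, ((i:ℕ)+1 < (j:ℕ) ∨ (j:ℕ)+1 < (i:ℕ)) → M i j = 0)
    (hd : ∀ i, M i i = 0) (p : ℕ) (hp : p + 1 < n)
    (hl : ∀ i j : Fin n, (i:ℕ)+1 = p → (j:ℕ) = p → M i j = 0)
    (hr : ∀ i j : Fin n, (i:ℕ) = p+1 → (j:ℕ) = p+2 → M i j = 0) :
    ∃ v : Fin n → ℂ,
      M.mulVec v = ((‖M ⟨p, Nat.lt_of_succ_lt hp⟩ ⟨p+1, hp⟩‖ : ℝ) : ℂ) • v ∧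
      v ⟨p, Nat.lt_of_succ_lt hp⟩ ≠ 0 ∧
      ∀ j : Fin n, (j:ℕ) ≠ p → (j:ℕ) ≠ p+1 → v j = 0 := by
  set P : Fin n := ⟨p, Nat.lt_of_succ_lt hp⟩ with hP
  set Q : Fin n := ⟨p+1, hp⟩ with hQ
  set c : ℂ := M P Q with hcdef
  set r : ℝ := ‖c‖ with hrdef
  set c' : ℂ := if c = 0 then 1 else c with hc'
  have hPQ : P ≠ Q := by simp [hP, hQ, Fin.ext_iff]
  set v : Fin n → ℂ :=
    fun j => (if j = P then c' else 0) + (if j = Q then (r:ℂ) else 0) with hv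
  have hvP : v P = c' := by simp [hv, hPQ]
  have hvQ : v Q = (r:ℂ) := by simp [hv, hPQ.symm]
  have hsupp : ∀ j : Fin n, (j:ℕ) ≠ p → (j:ℕ) ≠ p+1 → v j = 0 := by
    intro j h1 h2
    have hjP : j ≠ P := by simp [Fin.ext_iff, hP]; omega
    have hjQ : j ≠ Q := by simp [Fin.ext_iff, hQ]; omega
    simp [hv, hjP, hjQ]
  have hsum : ∀ i, M.mulVec v i = M i P * c' + M i Q * (r:ℂ) := by
    intro i
    simp [hv, Matrix.mulVec, dotProduct, mul_add, Finset.sum_add_distrib,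
      mul_ite, mul_zero]
  refine ⟨v, ?_, ?_, hsupp⟩
  · funext i
    rw [hsum i, Pi.smul_apply, smul_eq_mul]
    by_cases h1 : (i:ℕ) = p
    · have : i = P := by simp [Fin.ext_iff, hP, h1]
      subst this
      rw [hvP, hd, ← hcdef]
      by_cases hc : c = 0
      · simp [hc', hc, hrdef]
      · simp only [hc', if_neg hc]
        ring
    · by_cases h2 : (i:ℕ) = p+1
      · have : i = Q := by simp [Fin.ext_iff, hQ, h2]
        subst this
        rw [hvQ, hd]
        have hQP : M Q P = (starRingEnd ℂ) c := by
          rw [hcdef]; exact (hM.apply Q P).symm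
        rw [hQP]
        by_cases hc : c = 0
        · simp [hc', hc, hrdef]
        · simp only [hc', if_neg hc]
          rw [mul_comm ((starRingEnd ℂ) c) c, Complex.mul_conj, zero_mul, add_zero,
            hrdef, Complex.normSq_eq_norm_sq]
          push_cast
          ring
      · by_cases h3 : (i:ℕ)+1 = p
        · have e1 : M i P = 0 := hl i P h3 rfl
          have e2 : M i Q = 0 := htri i Q (by left; simp [hQ]; omega)
          rw [e1, e2, hsupp i (by omega) (by omega)]
          ring
        · by_cases h4 : (i:ℕ) = p+2
          · have e1 : M i P = 0 := htri i P (by right; simp [hP]; omega)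
            have e2 : M i Q = 0 := by
              rw [← hM.apply, hr Q i rfl h4, star_zero]
            rw [e1, e2, hsupp i (by omega) (by omega)]
            ring
          · have e1 : M i P = 0 := htri i P (by simp [hP]; omega)
            have e2 : M i Q = 0 := htri i Q (by simp [hQ]; omega)
            rw [e1, e2, hsupp i (by omega) (by omega)]
            ring
  · rw [hvP, hc']
    by_cases hc : c = 0
    · simp [hc]
    · simpa [hc] using hc

lemma singleton_eigenvector {n : ℕ} {M : Matrix (Fin n) (Fin n) ℂ}
    (hM : M.IsHermitian)
    (htri : ∀ i j : Fin n, ((i:ℕ)+1 < (j:ℕ) ∨ (j:ℕ)+1 < (i:ℕ)) → M i j = 0)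
    (hd : ∀ i, M i i = 0) (p : ℕ) (hp : p < n)
    (hl : ∀ i j : Fin n, (i:ℕ)+1 = p → (j:ℕ) = p → M i j = 0)
    (hr : ∀ i j : Fin n, (i:ℕ) = p → (j:ℕ) = p+1 → M i j = 0) :
    ∃ v : Fin n → ℂ,
      M.mulVec v = ((0:ℝ) : ℂ) • v ∧
      v ⟨p, hp⟩ ≠ 0 ∧
      ∀ j : Fin n, (j:ℕ) ≠ p → (j:ℕ) ≠ p+1 → v j = 0 := by
  set P : Fin n := ⟨p, hp⟩ with hP
  set v : Fin n → ℂ := fun j => if j = P then 1 else 0 with hv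
  have hsum : ∀ i, M.mulVec v i = M i P := by
    intro i
    simp [hv, Matrix.mulVec, dotProduct, mul_ite, mul_zero]
  refine ⟨v, ?_, by simp [hv], ?_⟩
  · funext i
    rw [hsum i, Pi.smul_apply, smul_eq_mul]
    push_cast
    rw [zero_mul]
    by_cases h1 : (i:ℕ) = p
    · have : i = P := by simp [Fin.ext_iff, hP, h1]
      subst this; exact hd P
    · by_cases h2 : (i:ℕ)+1 = p
      · exact hl i P h2 rfl
      · by_cases h3 : (i:ℕ) = p+1
        · rw [← hM.apply, hr P i rfl h3, star_zero]
        · exact htri i P (by simp [hP]; omega)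
  · intro j hj _
    have : j ≠ P := by simp [Fin.ext_iff, hP]; omega
    simp [hv, this]

lemma imPart_apply {n : ℕ} (A : Matrix (Fin n) (Fin n) ℂ) (i j : Fin n) :
    imPart A i j = (1 / (2 * Complex.I)) * (A i j - (starRingEnd ℂ) (A j i)) := by
  simp [imPart, Matrix.sub_apply, Matrix.conjTranspose_apply]

lemma imPart_entry_zero {n : ℕ} (A : Matrix (Fin n) (Fin n) ℂ) (i j : Fin n)
    (hrec : A j i * A i j = 1)
    (habs : ‖A j i‖ ^ 2 + ‖A i j‖ ^ 2 = 2) :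
    imPart A i j = 0 := by
  set a : ℂ := A j i with ha
  set b : ℂ := A i j with hb
  have hab : ‖a‖ * ‖b‖ = 1 := by
    rw [← norm_mul, hrec, norm_one]
  have hnn := norm_nonneg a
  have heqab : ‖a‖ = ‖b‖ := by
    nlinarith [sq_nonneg (‖a‖ - ‖b‖)]
  have ha1 : ‖a‖ = 1 := by nlinarith
  have hconj : (starRingEnd ℂ) a * a = 1 := by
    rw [mul_comm, Complex.mul_conj, Complex.normSq_eq_norm_sq, ha1]
    norm_num
  have hbconj : b = (starRingEnd ℂ) a := by
    calc b = ((starRingEnd ℂ) a * a) * b := by rw [hconj, one_mul]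
    _ = (starRingEnd ℂ) a * (a * b) := by ring
    _ = (starRingEnd ℂ) a := by rw [hrec, mul_one]
  rw [imPart_apply, ← ha, ← hb, hbconj, sub_self, mul_zero]

lemma imPart_entry_sq {n : ℕ} (A : Matrix (Fin n) (Fin n) ℂ) (i j : Fin n) (t : ℝ)
    (hrec : A j i * A i j = 1)
    (habs : ‖A j i‖ ^ 2 + ‖A i j‖ ^ 2 = 2 * t) :
    ‖imPart A i j‖ ^ 2 = (t - 1) / 2 := by
  set a : ℂ := A j i with ha
  set b : ℂ := A i j with hb
  rw [imPart_apply, ← ha, ← hb, norm_mul, mul_pow]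
  have h1 : ‖1 / (2 * Complex.I)‖ ^ 2 = 1 / 4 := by
    rw [one_div, norm_inv, norm_mul, Complex.norm_I, mul_one]
    norm_num
  have h2 : ‖b - (starRingEnd ℂ) a‖ ^ 2 = 2 * t - 2 := by
    rw [Complex.sq_norm, Complex.normSq_sub]
    have h3 : (b * (starRingEnd ℂ) ((starRingEnd ℂ) a)).re = 1 := by
      rw [Complex.conj_conj, mul_comm, hrec, Complex.one_re]
    rw [h3]
    have h4 : Complex.normSq b = ‖b‖ ^ 2 := (Complex.sq_norm b).symm
    have h5 : Complex.normSq ((starRingEnd ℂ) a) = ‖a‖ ^ 2 := by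
      rw [Complex.normSq_conj]; exact (Complex.sq_norm a).symm
    rw [h4, h5]; linarith
  rw [h1, h2]; ring

lemma eigenvalues_congr {n : ℕ} {M N : Matrix (Fin n) (Fin n) ℂ} (h : M = N)
    (hM : M.IsHermitian) (hN : N.IsHermitian) : hM.eigenvalues = hN.eigenvalues := by
  subst h; rfl

lemma reTheta_eq_imPart {n : ℕ} (A : Matrix (Fin n) (Fin n) ℂ) :
    reTheta A (-(Real.pi/2)) = imPart A := by
  have he : Complex.exp ((-(Real.pi/2) : ℝ) * Complex.I) = -Complex.I := by
    rw [Complex.exp_mul_I, ← Complex.ofReal_cos, ← Complex.ofReal_sin]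
    rw [Real.cos_neg, Real.sin_neg, Real.cos_pi_div_two, Real.sin_pi_div_two]
    simp
  have hI : (1 / (2 * Complex.I) : ℂ) = -Complex.I / 2 := by
    rw [one_div, mul_inv, Complex.inv_I]
    ring
  funext i j
  simp only [reTheta, imPart, he, hI, Matrix.smul_apply, Matrix.add_apply, Matrix.sub_apply,
    Matrix.conjTranspose_apply, smul_eq_mul, _root_.map_mul, Complex.conj_neg_I]
  simp only [star_neg, star_mul', Complex.star_def, _root_.map_mul, Complex.conj_I]
  ring

/-- For a reciprocal 2-periodic matrix of size `n ≥ 4`: if `A₁ = 1` or `A₂ = 1`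
then some `Re(e^{iθ}A)` has a repeated eigenvalue (so `A` is not generic);
in particular `Im A` has a repeated eigenvalue. -/
theorem reciprocal_two_periodic_not_generic (n : ℕ) (hn : 4 ≤ n)
    (A : Matrix (Fin n) (Fin n) ℂ) (htri : IsTridiagonal A)
    (hdiag : ∀ i : Fin n, A i i = 0)
    (hrec : ∀ i : Fin n, ∀ h : (i : ℕ) + 1 < n,
      A ⟨(i : ℕ) + 1, h⟩ i * A i ⟨(i : ℕ) + 1, h⟩ = 1)
    (A₁ A₂ : ℝ)
    (hper : ∀ i : Fin n, ∀ h : (i : ℕ) + 1 < n,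
      (‖A ⟨(i : ℕ) + 1, h⟩ i‖ ^ 2 + ‖A i ⟨(i : ℕ) + 1, h⟩‖ ^ 2) / 2 =
        if (i : ℕ) % 2 = 0 then A₁ else A₂)
    (h1 : A₁ = 1 ∨ A₂ = 1) :
    (∃ θ : ℝ, ¬Function.Injective (reTheta_isHermitian A θ).eigenvalues) ∧
      ¬Function.Injective (imPart_isHermitian A).eigenvalues := by
  have hM := imPart_isHermitian A
  set M := imPart A with hMdef
  have htriM : ∀ i j : Fin n, ((i:ℕ)+1 < (j:ℕ) ∨ (j:ℕ)+1 < (i:ℕ)) → M i j = 0 := by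
    intro i j h
    rw [hMdef, imPart_apply, htri i j h, htri j i (Or.symm h)]
    simp
  have hdM : ∀ i, M i i = 0 := by
    intro i; rw [hMdef, imPart_apply, hdiag]; simp
  have hzero : ∀ a : ℕ, ∀ (h1 : a < n) (h2 : a+1 < n),
      (if a % 2 = 0 then A₁ else A₂) = 1 → M ⟨a, h1⟩ ⟨a+1, h2⟩ = 0 := by
    intro a ha1 ha2 hval
    apply imPart_entry_zero A ⟨a, ha1⟩ ⟨a+1, ha2⟩ (hrec ⟨a, ha1⟩ ha2)
    have h3 := hper ⟨a, ha1⟩ ha2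
    simp only [show ((⟨a, ha1⟩ : Fin n) : ℕ) = a from rfl] at h3
    rw [hval] at h3
    linarith
  have hsq : ∀ a : ℕ, ∀ (h1 : a < n) (h2 : a+1 < n),
      ‖M ⟨a, h1⟩ ⟨a+1, h2⟩‖ ^ 2 = ((if a % 2 = 0 then A₁ else A₂) - 1) / 2 := by
    intro a ha1 ha2
    apply imPart_entry_sq A ⟨a, ha1⟩ ⟨a+1, ha2⟩ _ (hrec ⟨a, ha1⟩ ha2)
    have h3 := hper ⟨a, ha1⟩ ha2
    simp only [show ((⟨a, ha1⟩ : Fin n) : ℕ) = a from rfl] at h3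
    linarith
  have hentry : ∀ (a : ℕ) (i j : Fin n), (i:ℕ) = a → (j:ℕ) = a+1 →
      (if a % 2 = 0 then A₁ else A₂) = 1 → M i j = 0 := by
    intro a i j hi hj hval
    have h2 : a + 1 < n := hj ▸ j.isLt
    have hh1 : a < n := by omega
    have hieq : i = ⟨a, hh1⟩ := Fin.ext hi
    have hjeq : j = ⟨a+1, h2⟩ := Fin.ext hj
    rw [hieq, hjeq]
    exact hzero a hh1 h2 hval
  have habs_eq : ∀ (a b : ℕ) (ha1 : a < n) (ha2 : a+1 < n) (hb1 : b < n) (hb2 : b+1 < n),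
      a % 2 = b % 2 →
      ‖M ⟨b, hb1⟩ ⟨b+1, hb2⟩‖ = ‖M ⟨a, ha1⟩ ⟨a+1, ha2⟩‖ := by
    intro a b ha1 ha2 hb1 hb2 hab
    have e1 := hsq a ha1 ha2
    have e2 := hsq b hb1 hb2
    rw [hab] at e1
    have e3 : ‖M ⟨b, hb1⟩ ⟨b+1, hb2⟩‖ ^ 2
        = ‖M ⟨a, ha1⟩ ⟨a+1, ha2⟩‖ ^ 2 := e2.trans e1.symm
    calc ‖M ⟨b, hb1⟩ ⟨b+1, hb2⟩‖
        = Real.sqrt (‖M ⟨b, hb1⟩ ⟨b+1, hb2⟩‖ ^ 2) :=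
          (Real.sqrt_sq (norm_nonneg _)).symm
      _ = Real.sqrt (‖M ⟨a, ha1⟩ ⟨a+1, ha2⟩‖ ^ 2) := by rw [e3]
      _ = ‖M ⟨a, ha1⟩ ⟨a+1, ha2⟩‖ := Real.sqrt_sq (norm_nonneg _)
  have key : ¬ Function.Injective (imPart_isHermitian A).eigenvalues := by
    rcases h1 with hA1 | hA2
    · -- A₁ = 1 : entries M (i,i+1) vanish for even i
      by_cases hn5 : 5 ≤ n
      · -- use blocks {1,2} and {3,4}
        obtain ⟨v, hv, hvp, hvs⟩ := block_eigenvector hM htriM hdM 1 (by omega)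
          (fun i j hi hj => hentry 0 i j (by omega) (by omega) (by norm_num [hA1]))
          (fun i j hi hj => hentry 2 i j (by omega) (by omega) (by norm_num [hA1]))
        obtain ⟨w, hw, hwq, hws⟩ := block_eigenvector hM htriM hdM 3 (by omega)
          (fun i j hi hj => hentry 2 i j (by omega) (by omega) (by norm_num [hA1]))
          (fun i j hi hj => hentry 4 i j (by omega) (by omega) (by norm_num [hA1]))
        rw [habs_eq 1 3 (by omega) (by omega) (by omega) (by omega) (by norm_num)] at hw
        exact not_inj_combine hM _ 1 3 (by omega) (by omega) (by omega) v w hv hw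
          hvp hvs hwq hws
      · -- n = 4 : use singletons {0} and {3}
        have hn4 : n = 4 := by omega
        obtain ⟨v, hv, hvp, hvs⟩ := singleton_eigenvector hM htriM hdM 0 (by omega)
          (fun i j hi hj => absurd hi (by omega))
          (fun i j hi hj => hentry 0 i j (by omega) (by omega) (by norm_num [hA1]))
        obtain ⟨w, hw, hwq, hws⟩ := singleton_eigenvector hM htriM hdM 3 (by omega)
          (fun i j hi hj => hentry 2 i j (by omega) (by omega) (by norm_num [hA1]))
          (fun i j hi hj => absurd (hj ▸ j.isLt) (by omega))
        exact not_inj_combine hM 0 0 3 (by omega) (by omega) (by omega) v w hv hw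
          hvp hvs hwq hws
    · -- A₂ = 1 : entries M (i,i+1) vanish for odd i; use blocks {0,1} and {2,3}
      obtain ⟨v, hv, hvp, hvs⟩ := block_eigenvector hM htriM hdM 0 (by omega)
        (fun i j hi hj => absurd hi (by omega))
        (fun i j hi hj => hentry 1 i j (by omega) (by omega) (by norm_num [hA2]))
      obtain ⟨w, hw, hwq, hws⟩ := block_eigenvector hM htriM hdM 2 (by omega)
        (fun i j hi hj => hentry 1 i j (by omega) (by omega) (by norm_num [hA2]))
        (fun i j hi hj => hentry 3 i j (by omega) (by omega) (by norm_num [hA2]))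
      rw [habs_eq 0 2 (by omega) (by omega) (by omega) (by omega) (by norm_num)] at hw
      exact not_inj_combine hM _ 0 2 (by omega) (by omega) (by omega) v w hv hw
        hvp hvs hwq hws
  refine ⟨⟨-(Real.pi/2), ?_⟩, key⟩
  rw [eigenvalues_congr (reTheta_eq_imPart A) (reTheta_isHermitian A _) (imPart_isHermitian A)]
  exact key
end
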